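/- arXiv:1805.03829 — 6 statements merged into one kernel-verified Lean document; each statement's English description precedes it below -/
import Mathlib

section
/- Cycle mutual information tensorizes: for joint distributions p on X_a × X_b and integer k ≥ 1, I°_ℓ(p^{⊗k}) = k · I°_ℓ(p), where p^{⊗k} is the k-fold product distribution on X_a^k × X_b^k. -/
open Matrix Finset

/-
The entrywise square root of a product distribution is the entrywise product of square roots,
so `zk` is the `k`-fold tensor power `z^{⊗k}`. Tensor powers commute with transposition and
matrix multiplication (expand the product of sums), hence `(zk zkᵀ)^ℓ = ((z zᵀ)^ℓ)^{⊗k}`,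
and the trace of a tensor power is the power of the trace. Taking logarithms turns `k`-th
powers into multiplication by `k`.
-/

namespace Matrix

variable (ι : Type*) [Fintype ι] {m n o R : Type*} [CommSemiring R]

def tensorPow (M : Matrix m n R) : Matrix (ι → m) (ι → n) R :=
  fun a b => ∏ i, M (a i) (b i)

variable {ι}

theorem tensorPow_transpose (M : Matrix m n R) : (tensorPow ι M)ᵀ = tensorPow ι Mᵀ := rfl

theorem tensorPow_mul [DecidableEq ι] [Fintype n] (M : Matrix m n R) (N : Matrix n o R) :
    tensorPow ι M * tensorPow ι N = tensorPow ι (M * N) := by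
  ext a c
  simp only [mul_apply, tensorPow, Fintype.prod_sum, Finset.prod_mul_distrib]

theorem tensorPow_one [DecidableEq m] : tensorPow ι (1 : Matrix m m R) = 1 := by
  ext a b
  simp only [tensorPow, one_apply, Fintype.prod_boole, funext_iff]

theorem tensorPow_pow [DecidableEq ι] [Fintype m] [DecidableEq m] (M : Matrix m m R) (ℓ : ℕ) :
    tensorPow ι M ^ ℓ = tensorPow ι (M ^ ℓ) := by
  induction ℓ with
  | zero => rw [pow_zero, pow_zero, tensorPow_one]
  | succ ℓ ih => rw [pow_succ, pow_succ, ih, tensorPow_mul]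

theorem trace_tensorPow [DecidableEq ι] [Fintype m] (M : Matrix m m R) :
    trace (tensorPow ι M) = trace M ^ Fintype.card ι := by
  rw [trace, trace, ← card_univ, ← prod_const, Fintype.prod_sum]
  rfl

end Matrix

theorem cycleMutualInformation_tensorize_general
    {X Y : Type*} [Fintype X] [Fintype Y] [DecidableEq X]
    (p : X × Y → ℝ) (hp : ∀ a, 0 ≤ p a)
    (z : Matrix X Y ℝ) (hz : ∀ i j, z i j = Real.sqrt (p (i, j)))
    (k : ℕ)
    (zk : Matrix (Fin k → X) (Fin k → Y) ℝ)
    (hzk : ∀ a b, zk a b = Real.sqrt (∏ i, p (a i, b i)))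
    (ℓ : ℕ) :
    (1 / (1 - (ℓ : ℝ))) * Real.log (Matrix.trace ((zk * zkᵀ) ^ ℓ))
      = k * ((1 / (1 - (ℓ : ℝ))) * Real.log (Matrix.trace ((z * zᵀ) ^ ℓ))) := by
  have hzk_eq : zk = tensorPow (Fin k) z := by
    ext a b
    rw [hzk, Real.sqrt_prod _ fun i _ => hp _]
    exact prod_congr rfl fun i _ => (hz (a i) (b i)).symm
  have htrace : trace ((zk * zkᵀ) ^ ℓ) = trace ((z * zᵀ) ^ ℓ) ^ k := by
    rw [hzk_eq, tensorPow_transpose, tensorPow_mul, tensorPow_pow, trace_tensorPow,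
      Fintype.card_fin]
  rw [htrace, Real.log_pow]
  ring

/-- Cycle mutual information tensorizes: `I°_ℓ(p^{⊗k}) = k · I°_ℓ(p)`, where
`p^{⊗k}` is the `k`-fold product distribution on `X^k × Y^k`,
`I°_ℓ(p) = (1/(1-ℓ)) log trace ((z zᵀ)^ℓ)`, and `z` is the entrywise square root of `p`. -/
theorem cycleMutualInformation_tensorize
    {X Y : Type*} [Fintype X] [Fintype Y] [DecidableEq X] [DecidableEq Y]
    (p : X × Y → ℝ) (hp : ∀ a, 0 ≤ p a) (hsum : ∑ a : X × Y, p a = 1)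
    (z : Matrix X Y ℝ) (hz : ∀ i j, z i j = Real.sqrt (p (i, j)))
    (k : ℕ) (hk : 1 ≤ k)
    (zk : Matrix (Fin k → X) (Fin k → Y) ℝ)
    (hzk : ∀ a b, zk a b = Real.sqrt (∏ i, p (a i, b i)))
    (ℓ : ℕ) (hℓ : 2 ≤ ℓ) :
    (1 / (1 - (ℓ : ℝ))) * Real.log (Matrix.trace ((zk * zkᵀ) ^ ℓ))
      = k * ((1 / (1 - (ℓ : ℝ))) * Real.log (Matrix.trace ((z * zᵀ) ^ ℓ))) :=
  cycleMutualInformation_tensorize_general p hp z hz k zk hzk ℓ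
end

section
/- The vector of squared singular values of z majorizes the marginal distribution p_a: there exists a doubly stochastic matrix D with p_a = D σ², where σ² is the vector of squared singular values of z. -/
/-!
Schur's argument: with the spectral decomposition `z zᵀ = U diag(σ²) Uᵀ`, the diagonal entry
`∑ j, p (i, j) = (z zᵀ) i i` equals `∑ k, (U i k)² σ²_k`, and the matrix of squared moduli of
the entries of a unitary matrix is doubly stochastic because its rows and columns are unit vectors.
-/

open Matrix Finset

namespace Matrix

variable {n 𝕜 : Type*} [Fintype n] [DecidableEq n] [RCLike 𝕜]

theorem sum_norm_sq_row_eq_one_of_mem_unitaryGroup {U : Matrix n n 𝕜}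
    (hU : U ∈ unitaryGroup n 𝕜) (i : n) : ∑ j, ‖U i j‖ ^ 2 = 1 := by
  have h := congrFun (congrFun (mem_unitaryGroup_iff.mp hU) i) i
  simp only [mul_apply, star_apply, RCLike.star_def, RCLike.mul_conj, one_apply_eq] at h
  exact_mod_cast h

theorem of_norm_sq_mem_doublyStochastic {U : Matrix n n 𝕜} (hU : U ∈ unitaryGroup n 𝕜) :
    of (fun i j => ‖U i j‖ ^ 2) ∈ doublyStochastic ℝ n := by
  refine mem_doublyStochastic_iff_sum.mpr ⟨fun _ _ => sq_nonneg _,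
    sum_norm_sq_row_eq_one_of_mem_unitaryGroup hU, fun j => ?_⟩
  simpa using sum_norm_sq_row_eq_one_of_mem_unitaryGroup (transpose_mem_unitaryGroup_iff.mpr hU) j

theorem IsHermitian.apply_self_eq_sum_norm_sq_mul_eigenvalues {A : Matrix n n 𝕜}
    (hA : A.IsHermitian) (i : n) :
    A i i = ∑ k, (‖hA.eigenvectorUnitary i k‖ ^ 2 * hA.eigenvalues k : ℝ) := by
  conv_lhs => rw [hA.spectral_theorem]
  simp only [Unitary.conjStarAlgAut_apply, mul_apply, diagonal_apply, Function.comp_apply,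
    mul_ite, mul_zero, sum_ite_eq', mem_univ, if_true, star_apply, RCLike.star_def]
  push_cast
  refine sum_congr rfl fun k _ => ?_
  rw [mul_right_comm, RCLike.mul_conj]

theorem IsHermitian.exists_mem_doublyStochastic_re_diag_eq_mulVec_eigenvalues
    {A : Matrix n n 𝕜} (hA : A.IsHermitian) :
    ∃ D ∈ doublyStochastic ℝ n, (fun i => RCLike.re (A i i)) = D *ᵥ hA.eigenvalues :=
  ⟨_, of_norm_sq_mem_doublyStochastic hA.eigenvectorUnitary.2, funext fun i => by
    simp [hA.apply_self_eq_sum_norm_sq_mul_eigenvalues i, mulVec, dotProduct]⟩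

end Matrix

theorem marginal_majorized_by_sq_singular_values_general
    {X Y : Type*} [Fintype X] [Fintype Y] [DecidableEq X]
    (p : X × Y → ℝ) (hp : ∀ a, 0 ≤ p a)
    (z : Matrix X Y ℝ) (hz : ∀ i j, z i j = Real.sqrt (p (i, j)))
    (hHerm : (z * zᵀ).IsHermitian) :
    ∃ D ∈ doublyStochastic ℝ X,
      (fun i => ∑ j, p (i, j)) = D.mulVec hHerm.eigenvalues := by
  obtain ⟨D, hD, hdiag⟩ := hHerm.exists_mem_doublyStochastic_re_diag_eq_mulVec_eigenvalues
  refine ⟨D, hD, funext fun i => ?_⟩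
  rw [← congrFun hdiag i]
  simp only [RCLike.re_to_real, mul_apply, transpose_apply, hz, Real.mul_self_sqrt (hp _)]

/-- The vector of squared singular values of `z` (the eigenvalues of `z * zᵀ`)
majorizes the marginal `p_a`: there is a doubly stochastic matrix `D` with
`p_a = D • σ²`. -/
theorem marginal_majorized_by_sq_singular_values
    {X Y : Type*} [Fintype X] [Fintype Y] [DecidableEq X]
    (p : X × Y → ℝ) (hp : ∀ a, 0 ≤ p a) (hsum : ∑ a : X × Y, p a = 1)
    (z : Matrix X Y ℝ) (hz : ∀ i j, z i j = Real.sqrt (p (i, j)))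
    (hHerm : (z * zᵀ).IsHermitian) :
    ∃ D ∈ doublyStochastic ℝ X,
      (fun i => ∑ j, p (i, j)) = D.mulVec hHerm.eigenvalues :=
  marginal_majorized_by_sq_singular_values_general p hp z hz hHerm
end

section
/- For integer ℓ ≥ 2, cycle mutual information is bounded by the marginal Rényi entropies: I°_ℓ(p) ≤ min(H_ℓ(p_a), H_ℓ(p_b)). -/
/-!
Let `A = z zᵀ` with `z = √p` entrywise. Then `A` has nonnegative entries and its diagonal is the row
marginal `p_a`, so expanding `(A ^ ℓ) i i` as a sum of nonnegative path weights and keeping only the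
constant path gives `p_a(i) ^ ℓ ≤ (A ^ ℓ) i i`; summing, `∑ p_a(i) ^ ℓ ≤ tr (A ^ ℓ)`. The same holds
for `zᵀ z` and `p_b`, and `tr ((z zᵀ) ^ ℓ) = tr ((zᵀ z) ^ ℓ)`. Since `1 / (1 - ℓ) < 0`, taking
logarithms reverses both inequalities.
-/

open Matrix Finset

namespace Matrix

variable {m n R : Type*} [Fintype n]

section Trace

variable [Fintype m] [DecidableEq m] [DecidableEq n]

theorem mul_pow_mul_eq_mul_mul_pow [Semiring R] (A : Matrix m n R) (B : Matrix n m R) (k : ℕ) :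
    (A * B) ^ k * A = A * (B * A) ^ k := by
  induction k with
  | zero => simp
  | succ k ih =>
    rw [pow_succ', Matrix.mul_assoc, ih, pow_succ' (B * A), ← Matrix.mul_assoc,
      Matrix.mul_assoc A B A, Matrix.mul_assoc]

theorem trace_mul_pow_succ_comm [CommSemiring R] (A : Matrix m n R) (B : Matrix n m R) (k : ℕ) :
    ((A * B) ^ (k + 1)).trace = ((B * A) ^ (k + 1)).trace := by
  calc ((A * B) ^ (k + 1)).trace = (A * ((B * A) ^ k * B)).trace := by
        rw [pow_succ, ← Matrix.mul_assoc, mul_pow_mul_eq_mul_mul_pow, Matrix.mul_assoc]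
    _ = ((B * A) ^ k * B * A).trace := trace_mul_comm _ _
    _ = ((B * A) ^ (k + 1)).trace := by rw [Matrix.mul_assoc, ← pow_succ]

end Trace

section OrderedSemiring

variable [Semiring R] [PartialOrder R] [IsOrderedRing R]

theorem mul_transpose_apply_nonneg {z : Matrix m n R} (hz : ∀ i j, 0 ≤ z i j) (i j : m) :
    0 ≤ (z * zᵀ) i j :=
  sum_nonneg fun k _ => mul_nonneg (hz i k) (hz j k)

variable [DecidableEq n]

theorem apply_self_pow_le_pow_apply_self {A : Matrix n n R} (hA : ∀ i j, 0 ≤ A i j) (k : ℕ)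
    (i : n) : A i i ^ k ≤ (A ^ k) i i := by
  induction k with
  | zero => simp
  | succ k ih =>
    calc A i i ^ (k + 1) ≤ (A ^ k) i i * A i i := by
          rw [pow_succ]; exact mul_le_mul_of_nonneg_right ih (hA i i)
      _ ≤ ∑ l, (A ^ k) i l * A l i :=
          single_le_sum (fun l _ => mul_nonneg (pow_apply_nonneg hA k i l) (hA l i)) (mem_univ i)
      _ = (A ^ (k + 1)) i i := by rw [pow_succ, mul_apply]

theorem sum_diag_pow_le_trace_pow {A : Matrix n n R} (hA : ∀ i j, 0 ≤ A i j) (k : ℕ) :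
    ∑ i, A i i ^ k ≤ (A ^ k).trace :=
  sum_le_sum fun i _ => apply_self_pow_le_pow_apply_self hA k i

end OrderedSemiring

end Matrix

theorem log_sum_rowMarginal_pow_le_log_trace
    {X Y : Type*} [Fintype X] [Fintype Y] [DecidableEq X]
    (p : X × Y → ℝ) (hp : ∀ a, 0 ≤ p a) (hsum : ∑ a : X × Y, p a = 1)
    (z : Matrix X Y ℝ) (hz : ∀ i j, z i j = Real.sqrt (p (i, j))) (ℓ : ℕ) :
    Real.log (∑ i, (∑ j, p (i, j)) ^ ℓ) ≤ Real.log ((z * zᵀ) ^ ℓ).trace := by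
  have hdiag : ∀ i, (z * zᵀ) i i = ∑ j, p (i, j) := fun i => by
    simp only [mul_apply, transpose_apply, hz, Real.mul_self_sqrt (hp _)]
  have hnonneg : ∀ i j, 0 ≤ (z * zᵀ) i j :=
    mul_transpose_apply_nonneg fun i j => hz i j ▸ Real.sqrt_nonneg _
  obtain ⟨i, -, hi⟩ : ∃ i ∈ univ, 0 < ∑ j, p (i, j) :=
    exists_lt_of_sum_lt (by simp [← Fintype.sum_prod_type, hsum])
  have hpos : 0 < ∑ i, (∑ j, p (i, j)) ^ ℓ :=
    sum_pos' (fun i _ => pow_nonneg (sum_nonneg fun j _ => hp _) ℓ) ⟨i, mem_univ i, pow_pos hi ℓ⟩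
  refine Real.log_le_log hpos ?_
  simpa only [hdiag] using sum_diag_pow_le_trace_pow hnonneg ℓ

/-- Cycle mutual information is bounded by the marginal Rényi entropies:
`I°_ℓ(p) ≤ min (H_ℓ(p_a)) (H_ℓ(p_b))` for integer `ℓ ≥ 2`. -/
theorem cycleMutualInformation_le_min_renyiEntropy
    {X Y : Type*} [Fintype X] [Fintype Y] [DecidableEq X]
    (p : X × Y → ℝ) (hp : ∀ a, 0 ≤ p a) (hsum : ∑ a : X × Y, p a = 1)
    (z : Matrix X Y ℝ) (hz : ∀ i j, z i j = Real.sqrt (p (i, j)))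
    (ℓ : ℕ) (hℓ : 2 ≤ ℓ) :
    (1 / (1 - (ℓ : ℝ))) * Real.log (Matrix.trace ((z * zᵀ) ^ ℓ))
      ≤ min ((1 / (1 - (ℓ : ℝ))) * Real.log (∑ i, (∑ j, p (i, j)) ^ ℓ))
          ((1 / (1 - (ℓ : ℝ))) * Real.log (∑ j, (∑ i, p (i, j)) ^ ℓ)) := by
  classical
  have hc : 1 / (1 - (ℓ : ℝ)) ≤ 0 :=
    div_nonpos_of_nonneg_of_nonpos zero_le_one (sub_nonpos.mpr (Nat.one_le_cast.mpr (by omega)))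
  have hsum_swap : ∑ b : Y × X, p b.swap = 1 := by
    rw [← hsum]; exact (Equiv.prodComm Y X).sum_comp p
  have htrace : ((zᵀ * zᵀᵀ) ^ ℓ).trace = ((z * zᵀ) ^ ℓ).trace := by
    obtain ⟨k, rfl⟩ : ∃ k, ℓ = k + 1 := ⟨ℓ - 1, by omega⟩
    rw [transpose_transpose, trace_mul_pow_succ_comm]
  have hrow := log_sum_rowMarginal_pow_le_log_trace p hp hsum z hz ℓ
  have hcol := log_sum_rowMarginal_pow_le_log_trace (fun b => p b.swap) (fun b => hp b.swap)
    hsum_swap zᵀ (fun j i => hz i j) ℓ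
  rw [htrace] at hcol
  exact le_min (mul_le_mul_of_nonpos_left hrow hc) (mul_le_mul_of_nonpos_left hcol hc)
end

section
/- Conversely, if I°_2(p) = 0 then p is a product distribution: trace((z zᵀ)²) = 1 together with trace(z zᵀ) = 1 forces z to be rank one, hence p(i,j) = p_a(i) p_b(j). -/
/-!
The rows of `z` have Gram matrix `M = z * zᵀ`, and Lagrange's identity summed over all pairs of
rows says that the squares of the `2 × 2` minors of `z` add up to `2 (tr(M)² - tr(M²))`.
Here `tr M = ∑ p = 1`, and `I°_2(p) = 0` means `tr(M²) = 1`, so every minor vanishes: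
`z i j * z i' k = z i k * z i' j`. Squaring gives `p(i,j) p(i',k) = p(i,k) p(i',j)`, and summing
over `i'` and `k` yields `p(i,j) = p_a(i) p_b(j)`.
-/

open Matrix Finset

theorem Finset.sum_sum_sq_mul_sub_mul {ι R : Type*} [CommRing R] (s : Finset ι) (a b : ι → R) :
    ∑ j ∈ s, ∑ k ∈ s, (a j * b k - a k * b j) ^ 2
      = 2 * ((∑ j ∈ s, a j ^ 2) * (∑ k ∈ s, b k ^ 2) - (∑ j ∈ s, a j * b j) ^ 2) := by
  calc ∑ j ∈ s, ∑ k ∈ s, (a j * b k - a k * b j) ^ 2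
      = ∑ j ∈ s, ∑ k ∈ s, (a j ^ 2 * b k ^ 2 + a k ^ 2 * b j ^ 2
          - 2 * ((a j * b j) * (a k * b k))) :=
        sum_congr rfl fun _ _ => sum_congr rfl fun _ _ => by ring
    _ = _ := by
        simp only [sum_sub_distrib, sum_add_distrib, ← mul_sum, ← sum_mul]
        ring

namespace Matrix

variable {X Y R : Type*} [Fintype X] [Fintype Y]

theorem trace_mul_transpose_self [CommSemiring R] (z : Matrix X Y R) :
    trace (z * zᵀ) = ∑ i, ∑ j, z i j ^ 2 := by
  simp [trace, mul_apply, sq]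

theorem trace_sq_mul_transpose_self [CommSemiring R] [DecidableEq X] (z : Matrix X Y R) :
    trace ((z * zᵀ) ^ 2) = ∑ i, ∑ i', (∑ j, z i j * z i' j) ^ 2 := by
  simp [trace, sq, mul_apply, mul_comm]

theorem sum_sq_minors_eq_two_mul_sq_trace_sub_trace_sq [CommRing R] [DecidableEq X]
    (z : Matrix X Y R) :
    ∑ i, ∑ i', ∑ j, ∑ k, (z i j * z i' k - z i k * z i' j) ^ 2
      = 2 * (trace (z * zᵀ) ^ 2 - trace ((z * zᵀ) ^ 2)) := by
  simp only [Finset.sum_sum_sq_mul_sub_mul, trace_mul_transpose_self, trace_sq_mul_transpose_self,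
    sq (∑ i, _), sum_mul_sum, ← mul_sum, ← sum_sub_distrib]

theorem mul_eq_mul_of_sq_trace_eq_trace_sq [DecidableEq X] {z : Matrix X Y ℝ}
    (h : trace (z * zᵀ) ^ 2 = trace ((z * zᵀ) ^ 2)) (i i' : X) (j k : Y) :
    z i j * z i' k = z i k * z i' j := by
  have hzero : ∑ i, ∑ i', ∑ j, ∑ k, (z i j * z i' k - z i k * z i' j) ^ 2 = 0 := by
    rw [sum_sq_minors_eq_two_mul_sq_trace_sub_trace_sq, h, sub_self, mul_zero]
  have h₁ := (sum_eq_zero_iff_of_nonneg fun _ _ => by positivity).1 hzero i (mem_univ _)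
  have h₂ := (sum_eq_zero_iff_of_nonneg fun _ _ => by positivity).1 h₁ i' (mem_univ _)
  have h₃ := (sum_eq_zero_iff_of_nonneg fun _ _ => by positivity).1 h₂ j (mem_univ _)
  have h₄ := (sum_eq_zero_iff_of_nonneg fun _ _ => by positivity).1 h₃ k (mem_univ _)
  exact sub_eq_zero.1 (pow_eq_zero_iff two_ne_zero |>.1 h₄)

theorem IsSymm.trace_sq_pos {n : Type*} [Fintype n] [DecidableEq n] {A : Matrix n n ℝ}
    (hA : A.IsSymm) (h : A ≠ 0) : 0 < trace (A ^ 2) := by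
  have hAA : A ^ 2 = A * Aᴴ := by rw [sq, conjTranspose_eq_transpose_of_trivial, hA.eq]
  rw [hAA]
  exact (posSemidef_self_mul_conjTranspose A).trace_nonneg.lt_of_ne'
    (trace_mul_conjTranspose_self_eq_zero_iff.not.2 h)

end Matrix

theorem eq_sum_mul_sum_of_mul_eq_mul {X Y R : Type*} [Fintype X] [Fintype Y] [CommSemiring R]
    {p : X × Y → R} (hsum : ∑ a, p a = 1)
    (h : ∀ i i' j k, p (i, j) * p (i', k) = p (i, k) * p (i', j)) (i : X) (j : Y) :
    p (i, j) = (∑ j', p (i, j')) * (∑ i', p (i', j)) := by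
  calc p (i, j) = p (i, j) * ∑ a, p a := by rw [hsum, mul_one]
    _ = ∑ i', ∑ k, p (i, k) * p (i', j) := by
        simp only [Fintype.sum_prod_type, mul_sum, h i]
    _ = (∑ j', p (i, j')) * (∑ i', p (i', j)) := by
        rw [sum_mul_sum, sum_comm]

/-- If `I°_2(p) = 0` then `p` is a product distribution:
`p (i,j) = p_a i * p_b j` where `p_a`, `p_b` are the marginals. -/
theorem cycleMI_two_eq_zero_implies_product
    {X Y : Type*} [Fintype X] [Fintype Y] [DecidableEq X]
    (p : X × Y → ℝ) (hp : ∀ a, 0 ≤ p a) (hsum : ∑ a : X × Y, p a = 1)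
    (z : Matrix X Y ℝ) (hz : ∀ i j, z i j = Real.sqrt (p (i, j)))
    (hI : (1 / (1 - (2 : ℝ))) * Real.log (Matrix.trace ((z * zᵀ) ^ 2)) = 0) :
    ∀ i j, p (i, j) = (∑ j', p (i, j')) * (∑ i', p (i', j)) := by
  have hpz : ∀ i j, p (i, j) = z i j ^ 2 := fun i j => by rw [hz, Real.sq_sqrt (hp _)]
  have htr : trace (z * zᵀ) = 1 := by
    simp only [trace_mul_transpose_self, ← hpz, ← Fintype.sum_prod_type, hsum]
  have htr_sq : trace ((z * zᵀ) ^ 2) = 1 := by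
    have hsymm : (z * zᵀ).IsSymm := by rw [IsSymm, transpose_mul, transpose_transpose]
    have hne : z * zᵀ ≠ 0 := fun h0 => by
      rw [h0, trace_zero] at htr
      exact zero_ne_one htr
    refine Real.eq_one_of_pos_of_log_eq_zero (hsymm.trace_sq_pos hne) ?_
    exact (mul_eq_zero.1 hI).resolve_left (by norm_num)
  have hminor := mul_eq_mul_of_sq_trace_eq_trace_sq (z := z) (by rw [htr, htr_sq, one_pow])
  refine eq_sum_mul_sum_of_mul_eq_mul hsum fun i i' j k => ?_
  rw [hpz, hpz, hpz, hpz, ← mul_pow, ← mul_pow, hminor]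
end

section
/- The generating function B is symmetric: B_{m₁,m₂}(x,y) = B_{m₂,m₁}(x,y), for any two bijections m₁, m₂ between U_a and U_b. -/
/-!
With `c := m₁⁻¹ ∘ m₂`, the permutations `c` and `c⁻¹` have the same cycle type, hence are
conjugate. A conjugator yields `σ : Perm Ua` and `τ : Perm Ub` with `τ ∘ m₁ ∘ σ = m₂` and
`τ ∘ m₂ ∘ σ = m₁`. Since `B_{m₁,m₂}` is unchanged when both bijections are composed with the
same `σ` and `τ` (reindex `f_a` by `σ` and `f_b` by `τ`), the two bijections can be swapped.
-/

open Equiv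

theorem Equiv.Perm.isConj_inv {α : Type*} [Fintype α] [DecidableEq α] (c : Perm α) :
    IsConj c c⁻¹ := by
  rw [isConj_iff_cycleType_eq, cycleType_inv]

theorem Equiv.exists_perm_trans_swap {α β : Type*} [Fintype α] [DecidableEq α]
    (m₁ m₂ : α ≃ β) :
    ∃ (σ : Perm α) (τ : Perm β), σ.trans (m₁.trans τ) = m₂ ∧ σ.trans (m₂.trans τ) = m₁ := by
  set c : Perm α := m₂.trans m₁.symm
  obtain ⟨t, ht⟩ := isConj_iff.mp c.isConj_inv.symm
  have ht_apply : ∀ u, t (c⁻¹ (t⁻¹ u)) = c u := fun u => by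
    simpa only [Perm.mul_apply] using DFunLike.congr_fun ht u
  refine ⟨c⁻¹ * t⁻¹, m₁.permCongr t, ?_, ?_⟩ <;> ext u
  · simpa [c] using congrArg m₁ (ht_apply u)
  · simp [c]

section generatingFunction

variable {Ua Ub Xa Xb R : Type*} [Fintype Ua] [Fintype Ub] [DecidableEq Ua] [DecidableEq Ub]
  [Fintype Xa] [Fintype Xb] [CommSemiring R]

def generatingFunction (x y : Matrix Xa Xb R) (m₁ m₂ : Ua ≃ Ub) : R :=
  ∑ fa : Ua → Xa, ∑ fb : Ub → Xb,
    (∏ u, x (fa u) (fb (m₁ u))) * ∏ u, y (fa u) (fb (m₂ u))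

theorem generatingFunction_perm_trans (x y : Matrix Xa Xb R) (m₁ m₂ : Ua ≃ Ub)
    (σ : Perm Ua) (τ : Perm Ub) :
    generatingFunction x y (σ.trans (m₁.trans τ)) (σ.trans (m₂.trans τ)) =
      generatingFunction x y m₁ m₂ := by
  refine Fintype.sum_equiv (σ.arrowCongr (.refl Xa)) _ _ fun fa => ?_
  refine Fintype.sum_equiv (τ.symm.arrowCongr (.refl Xb)) _ _ fun fb => ?_
  congr 1 <;> exact Fintype.prod_equiv σ _ _ fun u => by simp

theorem generatingFunction_comm (x y : Matrix Xa Xb R) (m₁ m₂ : Ua ≃ Ub) :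
    generatingFunction x y m₁ m₂ = generatingFunction x y m₂ m₁ := by
  obtain ⟨σ, τ, h₁, h₂⟩ := m₁.exists_perm_trans_swap m₂
  rw [← generatingFunction_perm_trans x y m₁ m₂ σ τ, h₁, h₂]

end generatingFunction

/-- The generating function `B` is symmetric: `B_{m₁,m₂}(x,y) = B_{m₂,m₁}(x,y)`. -/
theorem generating_function_symm
    {Ua Ub Xa Xb : Type*} [Fintype Ua] [Fintype Ub] [Fintype Xa] [Fintype Xb]
    [DecidableEq Ua] [DecidableEq Ub]
    (x y : Matrix Xa Xb ℝ) (m₁ m₂ : Ua ≃ Ub) :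
    (∑ fa : Ua → Xa, ∑ fb : Ub → Xb,
        (∏ u : Ua, x (fa u) (fb (m₁ u))) * (∏ u : Ua, y (fa u) (fb (m₂ u))))
      = ∑ fa : Ua → Xa, ∑ fb : Ub → Xb,
          (∏ u : Ua, x (fa u) (fb (m₂ u))) * (∏ u : Ua, y (fa u) (fb (m₁ u))) :=
  generatingFunction_comm x y m₁ m₂
end

section
/- For any two bijections m₁, m₂ with d = n − |m₁ ∩ m₂|, B_{m₁,m₂}(z,z) ≤ (trace((z zᵀ)²))^{d/2}, where z is the entrywise square root of the joint distribution p. -/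
/-!
Summing out `fa` turns the left side into `∑ f, ∏ b, A (f b) (f (σ b))` with `A = zᵀ z` and
`σ = m₂ ∘ m₁⁻¹`; `A` is positive semidefinite of trace `∑ p = 1`. Diagonalising
`A = U diag(λ) Uᵀ` with `U` orthogonal, the sum collapses to `∑ ∏_b λ (g b)` over the functions `g`
constant on the cycles of `σ`, that is to `∏_cycles ∑_k λ_k ^ ℓ`. A fixed point contributes
`∑ λ_k = 1`, a cycle of length `ℓ ≥ 2` contributes `∑ λ_k ^ ℓ ≤ (∑ λ_k ^ 2) ^ (ℓ / 2)` since every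
`λ_k ≤ (∑ λ_k ^ 2) ^ (1 / 2)`; the nontrivial cycle lengths add up to `d`, and
`∑ λ_k ^ 2 = tr ((zᵀ z)²) = tr ((z zᵀ)²)`.
-/

open Matrix Finset

theorem Fintype.sum_prod_comp_eq_prod_sum_pow {β Q K R : Type*} [CommSemiring R] [Fintype β]
    [Fintype Q] [DecidableEq Q] [Fintype K] (π : β → Q) (w : K → R) :
    ∑ h : Q → K, ∏ b, w (h (π b)) = ∏ q, ∑ k, w k ^ #{b | π b = q} := by
  calc ∑ h : Q → K, ∏ b, w (h (π b)) = ∑ h : Q → K, ∏ q, w (h q) ^ #{b | π b = q} := by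
        refine Finset.sum_congr rfl fun h _ => ?_
        rw [← Finset.prod_fiberwise univ π]
        refine Finset.prod_congr rfl fun q _ => ?_
        rw [Finset.prod_congr rfl fun b hb => by rw [(mem_filter.1 hb).2], prod_const]
    _ = _ := (Fintype.prod_sum fun q k => w k ^ #{b | π b = q}).symm

theorem Finset.sum_pow_le_sqrt_sum_sq_pow {ι : Type*} (s : Finset ι) {w : ι → ℝ}
    (hw : ∀ i ∈ s, 0 ≤ w i) {n : ℕ} (hn : 2 ≤ n) :
    ∑ i ∈ s, w i ^ n ≤ √(∑ i ∈ s, w i ^ 2) ^ n := by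
  set r := √(∑ i ∈ s, w i ^ 2)
  have hr : r ^ 2 = ∑ i ∈ s, w i ^ 2 := Real.sq_sqrt (sum_nonneg fun i _ => sq_nonneg (w i))
  have hwr : ∀ i ∈ s, w i ≤ r := fun i hi =>
    Real.le_sqrt_of_sq_le (single_le_sum (fun j _ => sq_nonneg (w j)) hi)
  obtain ⟨m, rfl⟩ := Nat.exists_eq_add_of_le' hn
  calc ∑ i ∈ s, w i ^ (m + 2) = ∑ i ∈ s, w i ^ m * w i ^ 2 := by simp only [pow_add]
    _ ≤ ∑ i ∈ s, r ^ m * w i ^ 2 := by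
      gcongr with i hi
      exacts [hw i hi, hwr i hi]
    _ = r ^ (m + 2) := by rw [← mul_sum, ← hr, pow_add]

namespace Equiv.Perm

variable {β K : Type*}

theorem SameCycle.apply_eq_apply_of_comp_eq [Finite β] {σ : Perm β} {g : β → K}
    (hg : g ∘ σ = g) {x y : β} (h : σ.SameCycle x y) : g x = g y := by
  obtain ⟨n, -, rfl⟩ := h.exists_nat_pow_eq
  clear h
  induction n with
  | zero => rfl
  | succ n ih => rw [pow_succ', mul_apply]; exact ih.trans (congrFun hg _).symm

variable [Fintype β] [DecidableEq β] [Fintype K]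

-- `SameCycle.setoid σ` is not an instance, so its decidability has to be passed by hand.
instance (σ : Perm β) : Fintype (Quotient (SameCycle.setoid σ)) :=
  @Quotient.fintype _ _ _ (inferInstanceAs (DecidableRel σ.SameCycle))

instance (σ : Perm β) : DecidableEq (Quotient (SameCycle.setoid σ)) :=
  @Quotient.decidableEq _ _ (inferInstanceAs (DecidableRel σ.SameCycle))

theorem sum_filter_comp_eq_sum_comp_mk [DecidableEq K] {R : Type*} [AddCommMonoid R]
    (σ : Perm β) (F : (β → K) → R) :
    ∑ g with g ∘ σ = g, F g = ∑ h : Quotient (SameCycle.setoid σ) → K, F (h ∘ Quotient.mk _) := by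
  symm
  refine sum_nbij' (· ∘ Quotient.mk _) (· ∘ Quotient.out) (fun h _ => ?_) (fun _ _ => mem_univ _)
    (fun h _ => ?_) (fun g hg => ?_) (fun _ _ => rfl)
  · simp only [mem_filter, mem_univ, true_and]
    ext b
    exact congrArg h (Quotient.sound (sameCycle_apply_left.2 (SameCycle.refl σ b)))
  · ext q
    simp
  · ext b
    exact SameCycle.apply_eq_apply_of_comp_eq (mem_filter.1 hg).2
      (Quotient.mk_out (s := SameCycle.setoid σ) b)

theorem sum_pow_card_sameCycle_le {w : K → ℝ} (hw0 : ∀ k, 0 ≤ w k) (hw1 : ∑ k, w k = 1)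
    (σ : Perm β) (b : β) :
    ∑ k, w k ^ #{c | σ.SameCycle c b}
      ≤ √(∑ k, w k ^ 2) ^ #{c ∈ σ.support | σ.SameCycle c b} := by
  by_cases hb : σ b = b
  · have hcycle : ({c | σ.SameCycle c b} : Finset β) = {b} := by
      ext c
      simpa using ⟨fun h => h.eq_of_right hb, fun h => h ▸ SameCycle.refl σ c⟩
    have hsupp : {c ∈ σ.support | σ.SameCycle c b} = ∅ :=
      filter_eq_empty_iff.2 fun c hc h => mem_support.1 hc (h.eq_of_right hb ▸ hb)
    simp [hcycle, hsupp, hw1]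
  · have hsupp : {c ∈ σ.support | σ.SameCycle c b} = ({c | σ.SameCycle c b} : Finset β) := by
      ext c
      simp only [mem_filter, mem_univ, true_and, mem_support, and_iff_right_iff_imp]
      exact fun h => h.apply_eq_self_iff.not.2 hb
    have htwo : 2 ≤ #{c | σ.SameCycle c b} := one_lt_card.2
      ⟨b, mem_filter.2 ⟨mem_univ _, SameCycle.refl σ b⟩,
        σ b, mem_filter.2 ⟨mem_univ _, sameCycle_apply_left.2 (SameCycle.refl σ b)⟩, Ne.symm hb⟩
    rw [hsupp]
    exact sum_pow_le_sqrt_sum_sq_pow univ (fun k _ => hw0 k) htwo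

theorem sum_filter_comp_eq_prod_le_sqrt_pow [DecidableEq K] {w : K → ℝ} (hw0 : ∀ k, 0 ≤ w k)
    (hw1 : ∑ k, w k = 1) (σ : Perm β) :
    ∑ g : β → K with g ∘ σ = g, ∏ b, w (g b) ≤ √(∑ k, w k ^ 2) ^ #σ.support := by
  rw [sum_filter_comp_eq_sum_comp_mk]
  simp only [Function.comp_apply]
  rw [Fintype.sum_prod_comp_eq_prod_sum_pow]
  calc ∏ q, ∑ k, w k ^ #{b | ⟦b⟧ = q}
      ≤ ∏ q, √(∑ k, w k ^ 2) ^ #{b ∈ σ.support | ⟦b⟧ = q} := by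
        refine prod_le_prod (fun _ _ => sum_nonneg fun k _ => pow_nonneg (hw0 k) _) fun q _ => ?_
        induction q using Quotient.inductionOn with
        | h b =>
          have hmk : ∀ c, Quotient.mk (SameCycle.setoid σ) c = ⟦b⟧ ↔ σ.SameCycle c b :=
            fun _ => Quotient.eq
          simpa only [hmk] using sum_pow_card_sameCycle_le hw0 hw1 σ b
    _ = √(∑ k, w k ^ 2) ^ #σ.support := by
        rw [prod_pow_eq_pow_sum, ← card_eq_sum_card_fiberwise fun _ _ => mem_univ _]

end Equiv.Perm

theorem Equiv.card_sub_card_eq_card_support {α β : Type*} [Fintype α] [Fintype β]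
    [DecidableEq β] (m₁ m₂ : α ≃ β) :
    Fintype.card α - Fintype.card {a // m₁ a = m₂ a} = #(Perm.support (m₁.symm.trans m₂)) := by
  have hfix : Fintype.card {a // m₁ a = m₂ a}
      = Fintype.card (Function.fixedPoints (m₁.symm.trans m₂)) :=
    Fintype.card_congr (m₁.subtypeEquiv fun a => by simp [Function.IsFixedPt, eq_comm])
  rw [hfix, Perm.card_fixedPoints, Perm.sum_cycleType, Fintype.card_congr m₁]
  have := card_le_univ (Perm.support (m₁.symm.trans m₂))
  omega

namespace Matrix

variable {X β : Type*} [Fintype X] [Fintype β] [DecidableEq β]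

theorem sum_sum_prod_mul_prod_eq_sum_prod_transpose_mul {α Y R : Type*} [Fintype α]
    [DecidableEq α] [Fintype Y] [CommSemiring R] (z : Matrix Y X R) (m₁ m₂ : α ≃ β) :
    ∑ fa : α → Y, ∑ fb : β → X, (∏ a, z (fa a) (fb (m₁ a))) * ∏ a, z (fa a) (fb (m₂ a))
      = ∑ fb : β → X, ∏ b, (zᵀ * z) (fb b) (fb ((m₁.symm.trans m₂) b)) := by
  rw [sum_comm]
  refine sum_congr rfl fun fb _ => ?_
  calc ∑ fa : α → Y, (∏ a, z (fa a) (fb (m₁ a))) * ∏ a, z (fa a) (fb (m₂ a))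
      = ∏ a, ∑ y, z y (fb (m₁ a)) * z y (fb (m₂ a)) := by
        simp only [← prod_mul_distrib, Fintype.prod_sum]
    _ = ∏ a, (zᵀ * z) (fb (m₁ a)) (fb (m₂ a)) := by
        simp only [mul_apply, transpose_apply]
    _ = ∏ b, (zᵀ * z) (fb b) (fb ((m₁.symm.trans m₂) b)) :=
        Fintype.prod_equiv m₁ _ _ fun a => by simp

theorem sum_prod_conj_diagonal_apply_perm [DecidableEq X] {R : Type*} [CommSemiring R]
    {U : Matrix X X R} (hU : Uᵀ * U = 1) (w : X → R) (σ : Equiv.Perm β) :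
    ∑ f : β → X, ∏ b, (U * diagonal w * Uᵀ) (f b) (f (σ b))
      = ∑ g : β → X with g ∘ σ = g, ∏ b, w (g b) := by
  have hentry : ∀ x y, (U * diagonal w * Uᵀ) x y = ∑ k, w k * (U x k * U y k) := fun x y => by
    rw [mul_apply]
    simp only [mul_diagonal, transpose_apply]
    exact sum_congr rfl fun k _ => by ring
  have hinv : ∀ g : β → X, (∀ b, g b = g (σ⁻¹ b)) ↔ g ∘ σ = g := fun g => by
    rw [funext_iff, ← σ.forall_congr_right]
    simp [eq_comm]
  calc ∑ f : β → X, ∏ b, (U * diagonal w * Uᵀ) (f b) (f (σ b))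
      = ∑ g : β → X, (∏ b, w (g b)) * ∑ f : β → X, ∏ b, U (f b) (g b) * U (f b) (g (σ⁻¹ b)) := by
        simp_rw [hentry, Fintype.prod_sum]
        rw [sum_comm]
        refine sum_congr rfl fun g _ => ?_
        rw [mul_sum]
        refine sum_congr rfl fun f _ => ?_
        rw [prod_mul_distrib, prod_mul_distrib, prod_mul_distrib]
        congr 2
        exact Fintype.prod_equiv σ _ _ fun b => by simp
    _ = ∑ g : β → X, (∏ b, w (g b)) * ∏ b, (Uᵀ * U) (g b) (g (σ⁻¹ b)) := by
        simp only [mul_apply, transpose_apply, Fintype.prod_sum]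
    _ = ∑ g : β → X with g ∘ σ = g, ∏ b, w (g b) := by
        simp only [hU, one_apply, prod_boole, mem_univ, true_implies, hinv, mul_ite, mul_one,
          mul_zero, sum_ite, sum_const_zero, add_zero]

theorem IsHermitian.sum_prod_apply_perm [DecidableEq X] {A : Matrix X X ℝ} (hA : A.IsHermitian)
    (σ : Equiv.Perm β) :
    ∑ f : β → X, ∏ b, A (f b) (f (σ b))
      = ∑ g : β → X with g ∘ σ = g, ∏ b, hA.eigenvalues (g b) := by
  have hU : (hA.eigenvectorUnitary : Matrix X X ℝ)ᵀ * hA.eigenvectorUnitary = 1 := by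
    simpa [star_eq_conjTranspose] using Unitary.coe_star_mul_self hA.eigenvectorUnitary
  conv_lhs => rw [hA.spectral_theorem]
  simpa [star_eq_conjTranspose] using sum_prod_conj_diagonal_apply_perm hU hA.eigenvalues σ

theorem IsHermitian.trace_pow_eq_sum_eigenvalues_pow [DecidableEq X] {𝕜 : Type*} [RCLike 𝕜]
    {A : Matrix X X 𝕜} (hA : A.IsHermitian) (n : ℕ) :
    (A ^ n).trace = ∑ i, (hA.eigenvalues i : 𝕜) ^ n := by
  conv_lhs => rw [hA.spectral_theorem]
  rw [← map_pow, Unitary.conjStarAlgAut_apply, trace_mul_cycle, Unitary.coe_star_mul_self,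
    one_mul, diagonal_pow, trace_diagonal]
  rfl

theorem trace_mul_sq_comm {m n R : Type*} [Fintype m] [Fintype n] [DecidableEq m]
    [DecidableEq n] [CommSemiring R] (A : Matrix m n R) (B : Matrix n m R) :
    ((A * B) ^ 2).trace = ((B * A) ^ 2).trace := by
  rw [sq, sq, Matrix.mul_assoc, trace_mul_comm]
  simp only [Matrix.mul_assoc]

end Matrix

/-- For bijections `m₁, m₂` with `d = n - |m₁ ∩ m₂|` differences,
`B_{m₁,m₂}(z,z) ≤ (trace ((z zᵀ)²))^{d/2}`, where `z` is the entrywise square root of the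
joint distribution `p`. -/
theorem generating_function_le_trace_sq_pow
    {Ua Ub Xa Xb : Type*} [Fintype Ua] [Fintype Ub] [Fintype Xa] [Fintype Xb]
    [DecidableEq Ua] [DecidableEq Ub] [DecidableEq Xa]
    (p : Xa × Xb → ℝ) (hp : ∀ a, 0 ≤ p a) (hsum : ∑ a : Xa × Xb, p a = 1)
    (z : Matrix Xa Xb ℝ) (hz : ∀ i j, z i j = Real.sqrt (p (i, j)))
    (m₁ m₂ : Ua ≃ Ub)
    (d : ℕ) (hd : d = Fintype.card Ua - Fintype.card {u : Ua // m₁ u = m₂ u}) :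
    (∑ fa : Ua → Xa, ∑ fb : Ub → Xb,
        (∏ u : Ua, z (fa u) (fb (m₁ u))) * (∏ u : Ua, z (fa u) (fb (m₂ u))))
      ≤ (Matrix.trace ((z * zᵀ) ^ 2)) ^ ((d : ℝ) / 2) := by
  classical
  have hA := isHermitian_conjTranspose_mul_self z
  have hzH : zᴴ = zᵀ := conjTranspose_eq_transpose_of_trivial z
  have htrace : (zᵀ * z).trace = 1 := by
    rw [← hsum, Fintype.sum_prod_type, sum_comm]
    simp only [trace, Matrix.diag_apply, mul_apply, transpose_apply, hz, Real.mul_self_sqrt (hp _)]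
  have hw1 : ∑ k, hA.eigenvalues k = 1 := by
    simpa [htrace] using (hA.trace_pow_eq_sum_eigenvalues_pow 1).symm
  have hT : ((z * zᵀ) ^ 2).trace = ∑ k, hA.eigenvalues k ^ 2 := by
    rw [trace_mul_sq_comm, ← hzH, hA.trace_pow_eq_sum_eigenvalues_pow]
    rfl
  rw [hd, Equiv.card_sub_card_eq_card_support, sum_sum_prod_mul_prod_eq_sum_prod_transpose_mul,
    hT, ← hzH, hA.sum_prod_apply_perm,
    Real.rpow_div_two_eq_sqrt _ (sum_nonneg fun k _ => sq_nonneg _), Real.rpow_natCast]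
  exact Equiv.Perm.sum_filter_comp_eq_prod_le_sqrt_pow
    (eigenvalues_conjTranspose_mul_self_nonneg z) hw1 _
end
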